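/- Let α ∈ [0, 1), let N ≥ 1, and for each n = 0, 1, ..., N let a_n be an atom of the partition generating 𝓕_n, with a_0 = Ω, a_{n+1} ⊆ a_n, and d_n = P(a_n) > 0. Let F ∈ L_1(Ω) satisfy E_n F = d_n^{−1} · 1_{a_n} almost surely for every n = 0, 1, ..., N. Then almost surely Σ_{n=1}^N (E_n − E_{n−1})(M_n F) = Σ_{n=1}^N ( d_n^{α−1} · 1_{a_n} − (d_n^{α} / d_{n−1}) · 1_{a_{n−1}} ). -/

import Mathlib

open MeasureTheory Filter
open scoped ENNReal

/-- A probability space equipped with a sequence of σ-algebras `𝓕_n`, each generated by a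
finite or countable partition of `Ω` into measurable sets (atoms, indexed by `ℕ`, where empty
sets are allowed so that finite partitions are covered), such that `𝓕_0 = {∅, Ω}`, the sequence
is increasing, lies below the ambient σ-algebra, and separates points. -/
structure PartitionFiltration (Ω : Type*) [m : MeasurableSpace Ω] (P : Measure Ω) where
  part : ℕ → ℕ → Set Ω
  meas : ∀ n j, MeasurableSet (part n j)
  disj : ∀ n, Pairwise fun i j => Disjoint (part n i) (part n j)
  cover : ∀ n, (⋃ j, part n j) = Set.univ
  zero_trivial : ∀ j, part 0 j = ∅ ∨ part 0 j = Set.univ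
  mono : ∀ n, MeasurableSpace.generateFrom {s | ∃ j, s = part n j}
            ≤ MeasurableSpace.generateFrom {s | ∃ j, s = part (n + 1) j}
  le_ambient : ∀ n, MeasurableSpace.generateFrom {s | ∃ j, s = part n j} ≤ m
  separating : ∀ ω₁ ω₂ : Ω, ω₁ ≠ ω₂ → ∃ n j, ω₁ ∈ part n j ∧ ω₂ ∉ part n j

namespace PartitionFiltration

variable {Ω : Type*} [m : MeasurableSpace Ω] {P : Measure Ω} (pf : PartitionFiltration Ω P)

/-- The σ-algebra `𝓕_n`, generated by the atoms of the `n`-th partition. -/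
def filt (n : ℕ) : MeasurableSpace Ω :=
  MeasurableSpace.generateFrom {s | ∃ j, s = pf.part n j}

/-- The index of the atom of the `n`-th partition containing `ω`. -/
noncomputable def idx (n : ℕ) (ω : Ω) : ℕ := by
  classical exact if h : ∃ j, ω ∈ pf.part n j then h.choose else 0

/-- `b_n(ω)` is the probability of the atom of `𝓕_n` containing `ω`. -/
noncomputable def b (n : ℕ) (ω : Ω) : ℝ :=
  (P (pf.part n (pf.idx n ω))).toReal

/-- The conditional expectation `E_n f = 𝔼(f ∣ 𝓕_n)`. -/
noncomputable def E (n : ℕ) (f : Ω → ℝ) : Ω → ℝ :=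
  P[f | pf.filt n]

/-- The multiplication operator `M_n f = b_n^α · f`. -/
noncomputable def M (α : ℝ) (n : ℕ) (f : Ω → ℝ) : Ω → ℝ :=
  fun ω => pf.b n ω ^ α * f ω

/-- The partial sums `S_N = ∑_{n=1}^N M_n (E_n F - E_{n-1} F)` of the Riesz potential `I_α[F]`. -/
noncomputable def rieszSum (α : ℝ) (F : Ω → ℝ) (N : ℕ) : Ω → ℝ :=
  fun ω => ∑ n ∈ Finset.Icc 1 N, pf.M α n (fun ω' => pf.E n F ω' - pf.E (n - 1) F ω') ω

/-- The partial sums `S_N = ∑_{n=1}^N (E_n - E_{n-1})(M_n F)` of the formally conjugate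
Riesz potential `I'_α[F]`. -/
noncomputable def conjRieszSum (α : ℝ) (F : Ω → ℝ) (N : ℕ) : Ω → ℝ :=
  fun ω => ∑ n ∈ Finset.Icc 1 N, (pf.E n (pf.M α n F) ω - pf.E (n - 1) (pf.M α n F) ω)

end PartitionFiltration


namespace PartitionFiltration

variable {Ω : Type*} [m : MeasurableSpace Ω] {P : Measure Ω} (pf : PartitionFiltration Ω P)

lemma mem_idx (n : ℕ) (ω : Ω) : ω ∈ pf.part n (pf.idx n ω) := by
  have h : ∃ j, ω ∈ pf.part n j := by
    have h1 : ω ∈ ⋃ j, pf.part n j := (pf.cover n) ▸ Set.mem_univ ω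
    exact Set.mem_iUnion.1 h1
  rw [idx, dif_pos h]
  exact h.choose_spec

lemma idx_eq {n j : ℕ} {ω : Ω} (hω : ω ∈ pf.part n j) : pf.idx n ω = j := by
  by_contra hne
  exact Set.disjoint_left.1 (pf.disj n hne) (pf.mem_idx n ω) hω

lemma b_eq_of_mem {n j : ℕ} {ω : Ω} (hω : ω ∈ pf.part n j) :
    pf.b n ω = (P (pf.part n j)).toReal := by
  rw [b, pf.idx_eq hω]

lemma b_meas (n : ℕ) : Measurable[pf.filt n] (pf.b n) := by
  intro A _
  have hset : pf.b n ⁻¹' A = ⋃ j ∈ {j | (P (pf.part n j)).toReal ∈ A}, pf.part n j := by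
    ext ω
    simp only [Set.mem_preimage, Set.mem_iUnion, Set.mem_setOf_eq]
    constructor
    · intro h
      exact ⟨pf.idx n ω, h, pf.mem_idx n ω⟩
    · rintro ⟨j, hj, hωj⟩
      rwa [pf.b_eq_of_mem hωj]
  rw [hset]
  exact MeasurableSet.biUnion (Set.to_countable _) fun j _ =>
    MeasurableSpace.measurableSet_generateFrom ⟨j, rfl⟩

lemma atom_dichotomy {n jn : ℕ} {s : Set Ω} (hs : MeasurableSet[pf.filt n] s) :
    pf.part n jn ⊆ s ∨ Disjoint (pf.part n jn) s := by
  have h : MeasurableSpace.GenerateMeasurable {s | ∃ j, s = pf.part n j} s := hs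
  clear hs
  induction h with
  | basic t ht =>
    obtain ⟨i, rfl⟩ := ht
    rcases eq_or_ne jn i with rfl | hne
    · exact Or.inl subset_rfl
    · exact Or.inr (pf.disj n hne)
  | empty => exact Or.inr disjoint_bot_right
  | compl t _ ih =>
    rcases ih with h | h
    · exact Or.inr (Set.disjoint_left.2 fun x hx hxc => hxc (h hx))
    · exact Or.inl fun x hx => Set.disjoint_left.1 h hx
  | iUnion f _ ih =>
    by_cases hex : ∃ i, pf.part n jn ⊆ f i
    · obtain ⟨i, hi⟩ := hex
      exact Or.inl (hi.trans (Set.subset_iUnion f i))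
    · push_neg at hex
      refine Or.inr (Set.disjoint_iUnion_right.2 fun i => ?_)
      rcases ih i with h | h
      · exact absurd h (hex i)
      · exact h

end PartitionFiltration

/-- Let `α ∈ [0, 1)`, `N ≥ 1`, and for each `n = 0, 1, ..., N` let `a_n` be an atom of the
partition generating `𝓕_n`, with `a_0 = Ω`, `a_{n+1} ⊆ a_n` and `d_n = P(a_n) > 0`. If
`F ∈ L_1` satisfies `E_n F = d_n⁻¹ · 1_{a_n}` a.s. for every `n = 0, ..., N`, then a.s.
`∑_{n=1}^N (E_n - E_{n-1})(M_n F)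
  = ∑_{n=1}^N ( d_n^{α-1} · 1_{a_n} - (d_n^α / d_{n-1}) · 1_{a_{n-1}} )`. -/
theorem conj_riesz_partial_sum_on_atom_chain {Ω : Type*} [m : MeasurableSpace Ω]
    {P : Measure Ω} [IsProbabilityMeasure P] (pf : PartitionFiltration Ω P)
    (α : ℝ) (hα : α ∈ Set.Ico (0 : ℝ) 1) (N : ℕ) (hN : 1 ≤ N)
    (a : ℕ → Set Ω) (j : ℕ → ℕ) (ha : ∀ n, n ≤ N → a n = pf.part n (j n))
    (ha0 : a 0 = Set.univ)
    (hsub : ∀ n, n + 1 ≤ N → a (n + 1) ⊆ a n)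
    (hpos : ∀ n, n ≤ N → 0 < P (a n))
    (F : Ω → ℝ) (hF : Integrable F P)
    (hEF : ∀ n, n ≤ N →
      pf.E n F =ᵐ[P] fun ω => ((P (a n)).toReal)⁻¹ * (a n).indicator (1 : Ω → ℝ) ω) :
    (fun ω => ∑ n ∈ Finset.Icc 1 N,
        (pf.E n (pf.M α n F) ω - pf.E (n - 1) (pf.M α n F) ω))
      =ᵐ[P] fun ω => ∑ n ∈ Finset.Icc 1 N,
        ((P (a n)).toReal ^ (α - 1) * (a n).indicator (1 : Ω → ℝ) ω
          - ((P (a n)).toReal ^ α / (P (a (n - 1))).toReal)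
            * (a (n - 1)).indicator (1 : Ω → ℝ) ω) := by
  have hm' : ∀ n, pf.filt n ≤ m := pf.le_ambient
  have hd : ∀ n, n ≤ N → (0:ℝ) < (P (a n)).toReal := fun n hn =>
    ENNReal.toReal_pos (hpos n hn).ne' (measure_ne_top _ _)
  have hameas : ∀ n, n ≤ N → MeasurableSet (a n) := fun n hn =>
    (ha n hn) ▸ pf.meas n (j n)
  have hafilt : ∀ n, n ≤ N → MeasurableSet[pf.filt n] (a n) := fun n hn =>
    (ha n hn) ▸ MeasurableSpace.measurableSet_generateFrom ⟨j n, rfl⟩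
  -- Lemma A : E_n (M_n F) = d_n^(α-1) 1_{a n} a.e.
  have lemA : ∀ n, n ≤ N → pf.E n (pf.M α n F) =ᵐ[P]
      fun ω => (P (a n)).toReal ^ (α - 1) * (a n).indicator (1 : Ω → ℝ) ω := by
    intro n hn
    have hb_meas : Measurable[pf.filt n] fun ω => pf.b n ω ^ α :=
      (Real.continuous_rpow_const hα.1).measurable.comp (pf.b_meas n)
    have hb_sm : StronglyMeasurable[pf.filt n] fun ω => pf.b n ω ^ α :=
      hb_meas.stronglyMeasurable
    have hbdd : ∀ ω, ‖pf.b n ω ^ α‖ ≤ 1 := by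
      intro ω
      have hb0 : (0:ℝ) ≤ pf.b n ω := ENNReal.toReal_nonneg
      have hb1 : pf.b n ω ≤ 1 := by
        calc pf.b n ω = (P (pf.part n (pf.idx n ω))).toReal := rfl
          _ ≤ (1 : ℝ≥0∞).toReal := ENNReal.toReal_mono ENNReal.one_ne_top prob_le_one
          _ = 1 := ENNReal.toReal_one
      rw [Real.norm_eq_abs, abs_of_nonneg (Real.rpow_nonneg hb0 α)]
      exact Real.rpow_le_one hb0 hb1 hα.1
    have hMint : Integrable (fun ω => pf.b n ω ^ α * F ω) P :=
      Integrable.bdd_mul hF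
        ((hb_meas.mono (hm' n) le_rfl).stronglyMeasurable.aestronglyMeasurable) (Filter.Eventually.of_forall hbdd)
    have hpull : P[(fun ω => pf.b n ω ^ α) * F | pf.filt n]
        =ᵐ[P] (fun ω => pf.b n ω ^ α) * P[F | pf.filt n] :=
      condExp_mul_of_stronglyMeasurable_left hb_sm hMint hF
    have h3 : ∀ ω, pf.b n ω ^ α * (((P (a n)).toReal)⁻¹ * (a n).indicator (1 : Ω → ℝ) ω)
        = (P (a n)).toReal ^ (α - 1) * (a n).indicator (1 : Ω → ℝ) ω := by
      intro ω
      by_cases hω : ω ∈ a n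
      · have hb : pf.b n ω = (P (a n)).toReal := by
          rw [ha n hn] at hω ⊢
          exact pf.b_eq_of_mem hω
        rw [Set.indicator_of_mem hω, hb, Pi.one_apply,
          Real.rpow_sub (hd n hn), Real.rpow_one]
        ring
      · rw [Set.indicator_of_notMem hω]
        ring
    filter_upwards [hpull, hEF n hn] with ω h1 h2
    calc pf.E n (pf.M α n F) ω = pf.b n ω ^ α * (P[F | pf.filt n]) ω := h1
      _ = pf.b n ω ^ α * (((P (a n)).toReal)⁻¹ * (a n).indicator (1 : Ω → ℝ) ω) := by
          rw [show (P[F | pf.filt n]) ω = _ from h2]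
      _ = _ := h3 ω
  -- Lemma C : E_{n-1} (c · 1_{a n}) = c·(d_n/d_{n-1}) 1_{a (n-1)} a.e.
  have lemC : ∀ n, 1 ≤ n → n ≤ N → ∀ c : ℝ,
      (P[(fun ω => c * (a n).indicator (1 : Ω → ℝ) ω) | pf.filt (n - 1)]) =ᵐ[P]
        fun ω => c * (P (a n)).toReal / (P (a (n - 1))).toReal
          * (a (n - 1)).indicator (1 : Ω → ℝ) ω := by
    intro n hn1 hnN c
    have hn1N : n - 1 ≤ N := le_trans (Nat.sub_le n 1) hnN
    have hasub : a n ⊆ a (n - 1) := by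
      have h := hsub (n - 1) (by omega)
      rwa [Nat.sub_add_cancel hn1] at h
    have key : ∀ (t : Set Ω), MeasurableSet t → ∀ (C : ℝ) (s : Set Ω),
        ∫ x in s, C * t.indicator (fun _ => (1:ℝ)) x ∂P = C * (P (t ∩ s)).toReal := by
      intro t ht C s
      rw [integral_const_mul, setIntegral_indicator ht]
      simp [Set.inter_comm, Measure.real]
    refine (ae_eq_condExp_of_forall_setIntegral_eq (hm' (n - 1))
      (Integrable.const_mul ((integrable_const (1:ℝ)).indicator (hameas n hnN)) c)
      (fun s _ _ => (Integrable.const_mul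
        ((integrable_const (1:ℝ)).indicator (hameas (n-1) hn1N)) _).integrableOn)
      ?_ ?_).symm
    · intro s hs _
      have hs' : a (n - 1) ⊆ s ∨ Disjoint (a (n - 1)) s := by
        rw [ha (n - 1) hn1N]
        exact pf.atom_dichotomy hs
      rw [key _ (hameas (n-1) hn1N), key _ (hameas n hnN)]
      rcases hs' with h | h
      · rw [Set.inter_eq_left.2 (hasub.trans h), Set.inter_eq_left.2 h]
        exact div_mul_cancel₀ _ (hd (n-1) hn1N).ne'
      · have h1 : a (n - 1) ∩ s = ∅ := Set.disjoint_iff_inter_eq_empty.1 h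
        have h2 : a n ∩ s = ∅ := by
          apply Set.eq_empty_of_subset_empty
          rw [← h1]
          exact Set.inter_subset_inter_left s hasub
        rw [h1, h2]
        simp
    · refine StronglyMeasurable.aestronglyMeasurable ?_
      have hsm : Measurable[pf.filt (n-1)] ((a (n-1)).indicator (1 : Ω → ℝ)) :=
        (@measurable_const ℝ Ω _ (pf.filt (n-1)) 1).indicator (hafilt (n-1) hn1N)
      exact (hsm.const_mul _).stronglyMeasurable
  -- Lemma B : E_{n-1}(M_n F) = (d_n^α / d_{n-1}) 1_{a (n-1)} a.e.
  have lemB : ∀ n, 1 ≤ n → n ≤ N →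
      pf.E (n - 1) (pf.M α n F) =ᵐ[P]
        fun ω => (P (a n)).toReal ^ α / (P (a (n - 1))).toReal
          * (a (n - 1)).indicator (1 : Ω → ℝ) ω := by
    intro n hn1 hnN
    have h12 : pf.filt (n - 1) ≤ pf.filt n := by
      have h := pf.mono (n - 1)
      rwa [Nat.sub_add_cancel hn1] at h
    have t1 : pf.E (n - 1) (pf.M α n F)
        =ᵐ[P] P[(pf.E n (pf.M α n F)) | pf.filt (n - 1)] :=
      (condExp_condExp_of_le h12 (hm' n)).symm
    have t2 : P[(pf.E n (pf.M α n F)) | pf.filt (n - 1)] =ᵐ[P]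
        P[(fun ω => (P (a n)).toReal ^ (α - 1) * (a n).indicator (1 : Ω → ℝ) ω)
          | pf.filt (n - 1)] :=
      condExp_congr_ae (lemA n hnN)
    have t3 := lemC n hn1 hnN ((P (a n)).toReal ^ (α - 1))
    refine ((t1.trans t2).trans t3).trans (Filter.Eventually.of_forall fun ω => ?_)
    have hc : (P (a n)).toReal ^ (α - 1) * (P (a n)).toReal = (P (a n)).toReal ^ α := by
      rw [Real.rpow_sub (hd n hnN), Real.rpow_one]
      exact div_mul_cancel₀ _ (hd n hnN).ne'
    rw [← hc]
  -- Combine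
  have H : ∀ᵐ ω ∂P, ∀ n : (Finset.Icc 1 N), pf.E n (pf.M α n F) ω
      - pf.E ((n : ℕ) - 1) (pf.M α (n : ℕ) F) ω
      = (P (a n)).toReal ^ (α - 1) * (a n).indicator (1 : Ω → ℝ) ω
        - (P (a n)).toReal ^ α / (P (a ((n : ℕ) - 1))).toReal
          * (a ((n : ℕ) - 1)).indicator (1 : Ω → ℝ) ω := by
    rw [ae_all_iff]
    rintro ⟨n, hn⟩
    rw [Finset.mem_Icc] at hn
    filter_upwards [lemA n hn.2, lemB n hn.1 hn.2] with ω h1 h2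
    rw [h1, h2]
  filter_upwards [H] with ω hω
  refine Finset.sum_congr rfl fun n hn => ?_
  exact hω ⟨n, hn⟩
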